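/- Let d < 0 be an integer with d ≡ 1 (mod 8) and whose Legendre symbol modulo 7 satisfies (d/7) = −1. Then there do not exist integers a, b, c with 14 dividing a and b² − 4ac = 5d. Equivalently, the set of positive definite integral binary quadratic forms ax² + bxy + cy² of discriminant 5d whose leading coefficient a is divisible by 14 is empty. -/

import Mathlib

/-! Since `14 ∣ a`, the term `4ac` is divisible by `8`, so `b² ≡ 5d ≡ 5 (mod 8)`; but no square
is `5` modulo `8`. -/

instance : Fact (Nat.Prime 7) := ⟨by norm_num⟩

theorem Int.sq_emod_eight_ne_five (b : ℤ) : b ^ 2 % 8 ≠ 5 := by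
  have hlo : 0 ≤ b % 8 := Int.emod_nonneg b (by norm_num)
  have hhi : b % 8 < 8 := Int.emod_lt_of_pos b (by norm_num)
  rw [pow_two, Int.mul_emod]
  interval_cases b % 8 <;> decide

theorem Int.discrim_emod_eight_of_two_dvd {a : ℤ} (ha : 2 ∣ a) (b c : ℤ) :
    (b ^ 2 - 4 * a * c) % 8 = b ^ 2 % 8 := by
  obtain ⟨k, rfl⟩ := ha
  rw [show b ^ 2 - 4 * (2 * k) * c = b ^ 2 + 8 * (-(k * c)) by ring, Int.add_mul_emod_self_left]

theorem Int.discrim_emod_eight_ne_five_of_two_dvd {a : ℤ} (ha : 2 ∣ a) (b c : ℤ) :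
    (b ^ 2 - 4 * a * c) % 8 ≠ 5 := by
  rw [Int.discrim_emod_eight_of_two_dvd ha]
  exact Int.sq_emod_eight_ne_five b

theorem no_forms_conductor_14_general (d : ℤ) (hmod : d % 8 = 1) :
    ¬ ∃ a b c : ℤ, (14 : ℤ) ∣ a ∧ b ^ 2 - 4 * a * c = 5 * d := by
  rintro ⟨a, b, c, h14, hdisc⟩
  have h2 : (2 : ℤ) ∣ a := dvd_trans (by norm_num) h14
  apply Int.discrim_emod_eight_ne_five_of_two_dvd h2 b c
  omega

/-- Let `d < 0` be an integer with `d ≡ 1 (mod 8)` and Legendre symbol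
`(d/7) = -1`. Then there do not exist integers `a, b, c` with `14 ∣ a` and
`b² - 4ac = 5d`; equivalently, the set of positive definite integral binary quadratic
forms of discriminant `5d` with leading coefficient divisible by `14` is empty. -/
theorem no_forms_conductor_14 (d : ℤ) (hd : d < 0) (hmod : d % 8 = 1)
    (hleg : legendreSym 7 d = -1) :
    ¬ ∃ a b c : ℤ, (14 : ℤ) ∣ a ∧ b ^ 2 - 4 * a * c = 5 * d :=
  no_forms_conductor_14_general d hmod
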